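/- Let H : ℝ → ℝ be continuous and coercive and F0 : ℝ → ℝ be continuous, non-increasing and semi-coercive. If p ∈ χ⁻(ℜF0), then ℜF0 is constant equal to H(p) on the interval [p⁻, p]; if p ∈ χ⁺(ℜF0), then ℜF0 is constant equal to H(p) on [p, p⁺] ∩ ℝ. -/

import Mathlib

open Set Filter

attribute [local instance] Classical.propDecidable

noncomputable section

/-- `H` is coercive: `H p → +∞` as `|p| → +∞`. -/
def Coercive (H : ℝ → ℝ) : Prop := Tendsto H (cocompact ℝ) atTop

/-- `F` is semi-coercive: `F p → +∞` as `p → -∞`. -/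
def SemiCoercive (F : ℝ → ℝ) : Prop := Tendsto F atBot atTop

/-- Sub-relaxation: `(R̲F)(p) = sup_{q ≥ p} min (F q) (H q)`. -/
def subR (H F : ℝ → ℝ) (p : ℝ) : ℝ := sSup ((fun q => min (F q) (H q)) '' Ici p)

/-- Super-relaxation: `(R̄F)(p) = inf_{q ≤ p} max (F q) (H q)`. -/
def supR (H F : ℝ → ℝ) (p : ℝ) : ℝ := sInf ((fun q => max (F q) (H q)) '' Iic p)

/-- Relaxation operator: `R̲F` where `F ≥ H`, `R̄F` where `F ≤ H`. -/
def relax (H F : ℝ → ℝ) (p : ℝ) : ℝ := if H p ≤ F p then subR H F p else supR H F p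

/-- `p` is a negative characteristic point of `F` relative to `H`. -/
def negChar (H F : ℝ → ℝ) (p : ℝ) : Prop :=
  H p = F p ∧ ∃ ε > 0, ∀ q ∈ Ioo (p - ε) p, H q < H p

/-- `p` is a positive characteristic point of `F` relative to `H`. -/
def posChar (H F : ℝ → ℝ) (p : ℝ) : Prop :=
  H p = F p ∧ ∃ ε > 0, ∀ q ∈ Ioo p (p + ε), H p < H q

/-- The upper point `p⁺ ∈ ℝ ∪ {+∞}` associated with `p` and `H`. -/
def upperPt (H : ℝ → ℝ) (p : ℝ) : EReal :=
  if ∀ ε > 0, ∃ q, p < q ∧ q < p + ε ∧ H q ≤ H p then (p : EReal)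
  else sSup ((fun q : ℝ => (q : EReal)) '' {q : ℝ | p < q ∧ ∀ r ∈ Ioo p q, H p < H r})

/-- The lower point `p⁻` associated with `p` and `H`. -/
def lowerPt (H : ℝ → ℝ) (p : ℝ) : ℝ :=
  if ∀ ε > 0, ∃ q, p - ε < q ∧ q < p ∧ H p ≤ H q then p
  else sInf {q : ℝ | q < p ∧ ∀ r ∈ Ioo q p, H r < H p}

/-- `p` is a positive limiter point of `F`. -/
def posLimiter (H F : ℝ → ℝ) (p : ℝ) : Prop :=
  (p : EReal) < upperPt H p ∧ F p ≤ H p ∧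
    ∀ q : ℝ, H q < H p → F q ≤ H q →
      {r : ℝ | lowerPt H q < r ∧ (r : EReal) < upperPt H q} ∩
        {r : ℝ | p < r ∧ (r : EReal) < upperPt H p} = ∅

/-- `p` is a negative limiter point of `F`. -/
def negLimiter (H F : ℝ → ℝ) (p : ℝ) : Prop :=
  lowerPt H p < p ∧ H p ≤ F p ∧
    ∀ q : ℝ, H q ≤ F q → H p < H q →
      {r : ℝ | lowerPt H q < r ∧ (r : EReal) < upperPt H q} ∩ Ioo (lowerPt H p) p = ∅

/-- The Godunov flux associated with `H`. -/
def godunov (H : ℝ → ℝ) (q p : ℝ) : ℝ :=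
  if p ≤ q then sSup (H '' Icc p q) else sInf (H '' Icc q p)

/-- The lower (set-valued) Godunov semi-flux `G̲(q,p)`, as a subset of the extended reals. -/
def subG (H : ℝ → ℝ) (q p : ℝ) : Set EReal :=
  if q < p then {⊥}
  else if q = p then Iic ((H p : ℝ) : EReal)
  else {((godunov H q p : ℝ) : EReal)}

/-- The upper (set-valued) Godunov semi-flux `Ḡ(q,p)`, as a subset of the extended reals. -/
def supG (H : ℝ → ℝ) (q p : ℝ) : Set EReal :=
  if q < p then {((godunov H q p : ℝ) : EReal)}
  else if q = p then Ici ((H p : ℝ) : EReal)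
  else {⊤}

/-!
At a negative characteristic point `p`, `H < H p` just to the left of `p`, so `ℜF0 p = H p`
cannot come from the infimum defining `R̄F0 p` unless `F0 ≥ H p` just to the left of `p`; by
continuity `F0 p ≥ H p`, hence `ℜF0 = R̲F0` at `p`. On `[p⁻, p]` we have `H ≤ H p ≤ F0 p ≤ F0`,
so `ℜF0 = R̲F0` there too, and the supremum defining `R̲F0 q` is squeezed to `H p`: from below by
the value at `p`, from above because `min F0 H ≤ H ≤ H p` on `[q, p]` and `min F0 H ≤ R̲F0 p = H p`
beyond `p`. The positive case is the mirror image, with `R̄F0` and `H ≥ H p` on `[p, p⁺]`.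
-/

open Topology

section Relaxation

variable {H F : ℝ → ℝ} {p q c : ℝ}

lemma min_le_subR (hF : Antitone F) (hpq : p ≤ q) : min (F q) (H q) ≤ subR H F p :=
  le_csSup ⟨F p, by rintro _ ⟨s, hs, rfl⟩; exact (min_le_left _ _).trans (hF hs)⟩ ⟨q, hpq, rfl⟩

lemma subR_le (h : ∀ q, p ≤ q → min (F q) (H q) ≤ c) : subR H F p ≤ c :=
  csSup_le ⟨_, p, self_mem_Ici, rfl⟩ (by rintro _ ⟨q, hq, rfl⟩; exact h q hq)

lemma supR_le_max (hH : BddBelow (range H)) (hqp : q ≤ p) : supR H F p ≤ max (F q) (H q) := by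
  obtain ⟨m, hm⟩ := hH
  exact csInf_le ⟨m, by rintro _ ⟨s, -, rfl⟩; exact (hm ⟨s, rfl⟩).trans (le_max_right _ _)⟩
    ⟨q, hqp, rfl⟩

lemma le_supR (h : ∀ q, q ≤ p → c ≤ max (F q) (H q)) : c ≤ supR H F p :=
  le_csInf ⟨_, p, self_mem_Iic, rfl⟩ (by rintro _ ⟨q, hq, rfl⟩; exact h q hq)

lemma subR_eq_of_eq (hF : Antitone F) (h : F p = H p) : subR H F p = H p :=
  le_antisymm (subR_le fun _ hq => (min_le_left _ _).trans ((hF hq).trans h.le))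
    (by simpa [h] using min_le_subR (H := H) hF (le_refl p))

lemma supR_eq_of_eq (hF : Antitone F) (hH : BddBelow (range H)) (h : F p = H p) :
    supR H F p = H p :=
  le_antisymm (by simpa [h] using supR_le_max (F := F) hH (le_refl p))
    (le_supR fun _ hq => h ▸ (hF hq).trans (le_max_left _ _))

lemma relax_eq_subR_of_le (h : H p ≤ F p) : relax H F p = subR H F p := if_pos h

lemma relax_eq_supR_of_le (hF : Antitone F) (hH : BddBelow (range H)) (h : F p ≤ H p) :
    relax H F p = supR H F p := by
  rcases h.lt_or_eq with h | h
  · exact if_neg h.not_ge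
  · rw [relax_eq_subR_of_le h.ge, subR_eq_of_eq hF h, supR_eq_of_eq hF hH h]

end Relaxation

section CharacteristicPoints

variable {H F : ℝ → ℝ} {p q : ℝ}

lemma apply_le_of_mem_Icc_lowerPt (hH : Continuous H)
    (hp : ∃ ε > 0, ∀ q ∈ Ioo (p - ε) p, H q < H p) :
    ∀ x ∈ Icc (lowerPt H p) p, H x ≤ H p := by
  obtain ⟨ε, hε, hlt⟩ := hp
  have hnot : ¬ ∀ ε > 0, ∃ q, p - ε < q ∧ q < p ∧ H p ≤ H q := fun h =>
    let ⟨q, h₁, h₂, h₃⟩ := h ε hε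
    (hlt q ⟨h₁, h₂⟩).not_ge h₃
  rw [lowerPt, if_neg hnot]
  intro x ⟨hx, hxp⟩
  rcases hxp.eq_or_lt with rfl | hxp
  · exact le_rfl
  have hne : {q : ℝ | q < p ∧ ∀ r ∈ Ioo q p, H r < H p}.Nonempty :=
    ⟨p - ε / 2, by linarith, fun r hr => hlt r ⟨by linarith [hr.1], hr.2⟩⟩
  have hright : ∀ y ∈ Ioo x p, H y < H p := fun y hy =>
    let ⟨_, hs, hsy⟩ := exists_lt_of_csInf_lt hne (hx.trans_lt hy.1)
    hs.2 y ⟨hsy, hy.2⟩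
  refine le_of_tendsto (hH.tendsto x |>.mono_left nhdsWithin_le_nhds : Tendsto H (𝓝[>] x) _) ?_
  filter_upwards [Ioo_mem_nhdsGT hxp] with y hy using (hright y hy).le

lemma le_apply_of_mem_Icc_of_le_upperPt (hH : Continuous H)
    (hp : ∃ ε > 0, ∀ q ∈ Ioo p (p + ε), H p < H q) (hq : (q : EReal) ≤ upperPt H p) :
    ∀ x ∈ Icc p q, H p ≤ H x := by
  obtain ⟨ε, hε, hlt⟩ := hp
  have hnot : ¬ ∀ ε > 0, ∃ r, p < r ∧ r < p + ε ∧ H r ≤ H p := fun h =>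
    let ⟨r, h₁, h₂, h₃⟩ := h ε hε
    (hlt r ⟨h₁, h₂⟩).not_ge h₃
  rw [upperPt, if_neg hnot] at hq
  intro x ⟨hpx, hxq⟩
  rcases hpx.eq_or_lt with rfl | hpx
  · exact le_rfl
  have hleft : ∀ y ∈ Ioo p x, H p < H y := fun y hy => by
    obtain ⟨_, ⟨t, ht, rfl⟩, hyt⟩ :=
      lt_sSup_iff.mp ((EReal.coe_lt_coe_iff.mpr (hy.2.trans_le hxq)).trans_le hq)
    exact ht.2 y ⟨hy.1, EReal.coe_lt_coe_iff.mp hyt⟩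
  refine ge_of_tendsto (hH.tendsto x |>.mono_left nhdsWithin_le_nhds : Tendsto H (𝓝[<] x) _) ?_
  filter_upwards [Ioo_mem_nhdsLT hpx] with y hy using (hleft y hy).le

lemma le_of_negChar_relax (hH : BddBelow (range H)) (hF : ContinuousAt F p)
    (hp : negChar H (relax H F) p) : H p ≤ F p := by
  obtain ⟨hrel, ε, hε, hlt⟩ := hp
  by_contra! hFp
  have hsup : supR H F p = H p := by rw [hrel, relax, if_neg hFp.not_ge]
  have hleft : ∀ᶠ s in 𝓝[<] p, H p ≤ F s := by
    filter_upwards [Ioo_mem_nhdsLT (by linarith : p - ε < p)] with s hs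
    exact (le_max_iff.mp (hsup ▸ supR_le_max hH hs.2.le)).resolve_right (hlt s hs).not_ge
  exact hFp.not_ge (ge_of_tendsto (hF.mono_left nhdsWithin_le_nhds) hleft)

lemma le_of_posChar_relax (hFa : Antitone F) (hF : ContinuousAt F p) (hp : posChar H (relax H F) p) :
    F p ≤ H p := by
  obtain ⟨hrel, ε, hε, hlt⟩ := hp
  by_contra! hFp
  have hsub : subR H F p = H p := by rw [hrel, relax, if_pos hFp.le]
  have hright : ∀ᶠ s in 𝓝[>] p, F s ≤ H p := by
    filter_upwards [Ioo_mem_nhdsGT (by linarith : p < p + ε)] with s hs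
    exact (min_le_iff.mp (hsub ▸ min_le_subR hFa hs.1.le)).resolve_right (hlt s hs).not_ge
  exact hFp.not_ge (le_of_tendsto (hF.mono_left nhdsWithin_le_nhds) hright)

end CharacteristicPoints

section Constancy

variable {H F : ℝ → ℝ} {p q : ℝ}

theorem relax_eq_of_mem_Icc_lowerPt (hH : Continuous H) (hHb : BddBelow (range H))
    (hF : Continuous F) (hFa : Antitone F) (hp : negChar H (relax H F) p)
    (hq : q ∈ Icc (lowerPt H p) p) : relax H F q = H p := by
  have hHF : H p ≤ F p := le_of_negChar_relax hHb hF.continuousAt hp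
  have hsub : subR H F p = H p := by rw [← relax_eq_subR_of_le hHF, ← hp.1]
  have hHle := apply_le_of_mem_Icc_lowerPt hH hp.2
  rw [relax_eq_subR_of_le ((hHle q hq).trans (hHF.trans (hFa hq.2)))]
  refine le_antisymm (subR_le fun s hs => ?_) ?_
  · rcases le_total p s with hps | hsp
    · exact hsub ▸ min_le_subR hFa hps
    · exact (min_le_right _ _).trans (hHle s ⟨hq.1.trans hs, hsp⟩)
  · simpa [min_eq_right hHF] using min_le_subR (H := H) hFa hq.2

theorem relax_eq_of_le_upperPt (hH : Continuous H) (hHb : BddBelow (range H))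
    (hF : Continuous F) (hFa : Antitone F) (hp : posChar H (relax H F) p)
    (hpq : p ≤ q) (hq : (q : EReal) ≤ upperPt H p) : relax H F q = H p := by
  have hFH : F p ≤ H p := le_of_posChar_relax hFa hF.continuousAt hp
  have hsup : supR H F p = H p := by rw [← relax_eq_supR_of_le hFa hHb hFH, ← hp.1]
  have hleH := le_apply_of_mem_Icc_of_le_upperPt hH hp.2 hq
  rw [relax_eq_supR_of_le hFa hHb ((hFa hpq).trans (hFH.trans (hleH q ⟨hpq, le_rfl⟩)))]
  refine le_antisymm ?_ (le_supR fun s hs => ?_)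
  · simpa [max_eq_right hFH] using supR_le_max (F := F) hHb hpq
  · rcases le_total s p with hsp | hps
    · exact hsup ▸ supR_le_max hHb hsp
    · exact (hleH s ⟨hps, hs⟩).trans (le_max_right _ _)

end Constancy

theorem relax_constant_near_characteristic_points_general (H F0 : ℝ → ℝ)
    (hH : Continuous H) (hHc : Coercive H)
    (hF : Continuous F0) (hFa : Antitone F0) (p : ℝ) :
    (negChar H (relax H F0) p → ∀ q ∈ Icc (lowerPt H p) p, relax H F0 q = H p) ∧
    (posChar H (relax H F0) p →
      ∀ q : ℝ, p ≤ q → (q : EReal) ≤ upperPt H p → relax H F0 q = H p) := by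
  obtain ⟨x₀, hx₀⟩ := hH.exists_forall_le hHc
  have hHb : BddBelow (range H) := ⟨H x₀, by rintro _ ⟨y, rfl⟩; exact hx₀ y⟩
  exact ⟨fun hp _ hq => relax_eq_of_mem_Icc_lowerPt hH hHb hF hFa hp hq,
    fun hp _ hpq hq => relax_eq_of_le_upperPt hH hHb hF hFa hp hpq hq⟩

/-- `ℜF0` is constant on `[p⁻,p]` (resp. `[p,p⁺] ∩ ℝ`) at negative (resp. positive)
characteristic points of `ℜF0`. -/
theorem relax_constant_near_characteristic_points (H F0 : ℝ → ℝ)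
    (hH : Continuous H) (hHc : Coercive H)
    (hF : Continuous F0) (hFa : Antitone F0) (hFs : SemiCoercive F0) (p : ℝ) :
    (negChar H (relax H F0) p → ∀ q ∈ Icc (lowerPt H p) p, relax H F0 q = H p) ∧
    (posChar H (relax H F0) p →
      ∀ q : ℝ, p ≤ q → (q : EReal) ≤ upperPt H p → relax H F0 q = H p) :=
  relax_constant_near_characteristic_points_general H F0 hH hHc hF hFa p
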